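/- arXiv:0908.4170 — 2 statements merged into one kernel-verified Lean document; each statement's English description precedes it below -/
import Mathlib

section
/- The function R(a) = sinh(a) · ∫₁^∞ (sinh²(a)·s² + 1)^(−1/2) · (s^(2n−2) − 1)^(−1/2) ds is strictly increasing in a on (0, ∞). -/
/-!
Writing `c = sinh a`, the function is `∫₁^∞ c / √(c²s² + 1) · (s^(2n-2) - 1)^(-1/2) ds`.
For each `s` the factor `c / √(c²s² + 1)` is strictly increasing in `c ≥ 0` and bounded by `1/s`,
and `1 / (s √(s^m - 1))` is integrable on `(1, ∞)`, being the derivative of the bounded increasing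
function `(2/m) arctan √(s^m - 1)`. So the integrals exist and increase strictly with `c`,
and `sinh` is strictly increasing.
-/

open Real MeasureTheory Set Filter Topology

theorem setIntegral_lt_setIntegral_of_forall_lt {X : Type*} [MeasurableSpace X] {μ : Measure X}
    {s : Set X} {f g : X → ℝ} (hs : MeasurableSet s) (hμs : μ s ≠ 0)
    (hf : IntegrableOn f s μ) (hg : IntegrableOn g s μ) (hlt : ∀ x ∈ s, f x < g x) :
    ∫ x in s, f x ∂μ < ∫ x in s, g x ∂μ := by
  have hpos : ∀ x ∈ s, 0 < g x - f x := fun x hx => sub_pos.2 (hlt x hx)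
  rw [← sub_pos, ← integral_sub hg hf,
    setIntegral_pos_iff_support_of_nonneg_ae (f := fun x => g x - f x) _ (hg.sub hf),
    inter_eq_right.2 fun x hx => Function.mem_support.2 (hpos x hx).ne']
  · exact pos_iff_ne_zero.2 hμs
  · filter_upwards [ae_restrict_mem hs] with x hx using (hpos x hx).le

theorem hasDerivAt_arctan_sqrt_pow_sub_one {m : ℕ} (hm : m ≠ 0) {s : ℝ} (hs : 1 < s) :
    HasDerivAt (fun s => 2 / m * arctan √(s ^ m - 1)) (s⁻¹ * (√(s ^ m - 1))⁻¹) s := by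
  have hsm : 0 < s ^ m - 1 := sub_pos.2 (one_lt_pow₀ hs hm)
  refine ((((hasDerivAt_pow m s).sub_const 1).sqrt hsm.ne').arctan.const_mul _).congr_deriv ?_
  have hpow : s ^ m = s * s ^ (m - 1) := by
    rw [← pow_succ', Nat.sub_add_cancel (Nat.one_le_iff_ne_zero.2 hm)]
  have hs0 : (0:ℝ) < s := by linarith
  have hsqrt : 0 < √(s ^ m - 1) := sqrt_pos.2 hsm
  rw [sq_sqrt hsm.le, add_sub_cancel, hpow]
  field_simp

theorem integrableOn_inv_mul_inv_sqrt_pow_sub_one {m : ℕ} (hm : m ≠ 0) :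
    IntegrableOn (fun s : ℝ => s⁻¹ * (√(s ^ m - 1))⁻¹) (Ioi 1) := by
  refine integrableOn_Ioi_deriv_of_nonneg (g := fun s => 2 / m * arctan √(s ^ m - 1))
    (by fun_prop) (fun s hs => hasDerivAt_arctan_sqrt_pow_sub_one hm hs) (fun s hs => ?_)
    (Tendsto.const_mul _ (a := π / 2) ?_)
  · have hs0 : (0:ℝ) < s := zero_lt_one.trans hs
    positivity
  · exact (tendsto_arctan_atTop.mono_right nhdsWithin_le_nhds).comp
      (tendsto_sqrt_atTop.comp (tendsto_atTop_add_const_right _ _ (tendsto_pow_atTop hm)))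

theorem div_sqrt_sq_mul_sq_add_one_le_inv (c : ℝ) {s : ℝ} (hs : 0 < s) :
    c / √(c ^ 2 * s ^ 2 + 1) ≤ s⁻¹ := by
  rw [div_le_iff₀ (by positivity), inv_mul_eq_div, le_div_iff₀ hs]
  exact (le_abs_self _).trans (abs_le_sqrt (by nlinarith))

theorem strictMonoOn_div_sqrt_sq_mul_sq_add_one (s : ℝ) :
    StrictMonoOn (fun c : ℝ => c / √(c ^ 2 * s ^ 2 + 1)) (Ici 0) := by
  intro p (hp : 0 ≤ p) q (hq : 0 ≤ q) hpq
  rw [div_lt_div_iff₀ (by positivity) (by positivity)]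
  refine lt_of_pow_lt_pow_left₀ 2 (by positivity) ?_
  rw [mul_pow, mul_pow, sq_sqrt (by positivity), sq_sqrt (by positivity)]
  nlinarith [mul_self_lt_mul_self hp hpq, sq_nonneg s]

theorem integrableOn_div_sqrt_mul_inv_sqrt_pow_sub_one {m : ℕ} (hm : m ≠ 0) {c : ℝ}
    (hc : 0 ≤ c) :
    IntegrableOn (fun s : ℝ => c / √(c ^ 2 * s ^ 2 + 1) * (√(s ^ m - 1))⁻¹) (Ioi 1) := by
  refine (integrableOn_inv_mul_inv_sqrt_pow_sub_one hm).mono'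
    (by fun_prop : Measurable _).aestronglyMeasurable ?_
  filter_upwards [ae_restrict_mem measurableSet_Ioi] with s hs
  rw [norm_of_nonneg (by positivity)]
  exact mul_le_mul_of_nonneg_right
    (div_sqrt_sq_mul_sq_add_one_le_inv c (zero_lt_one.trans hs)) (by positivity)

theorem strictMonoOn_mul_integral_one_div_sqrt_mul_sqrt {m : ℕ} (hm : m ≠ 0) :
    StrictMonoOn (fun c : ℝ => c * ∫ s in Ioi (1:ℝ), 1 / (√(c ^ 2 * s ^ 2 + 1) * √(s ^ m - 1)))
      (Ici 0) := by
  have hpull : ∀ c : ℝ, c * ∫ s in Ioi (1:ℝ), 1 / (√(c ^ 2 * s ^ 2 + 1) * √(s ^ m - 1)) =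
      ∫ s in Ioi (1:ℝ), c / √(c ^ 2 * s ^ 2 + 1) * (√(s ^ m - 1))⁻¹ := fun c => by
    rw [← integral_const_mul]
    congr with s
    ring
  intro p hp q hq hpq
  simp only [hpull]
  refine setIntegral_lt_setIntegral_of_forall_lt measurableSet_Ioi (by simp)
    (integrableOn_div_sqrt_mul_inv_sqrt_pow_sub_one hm hp)
    (integrableOn_div_sqrt_mul_inv_sqrt_pow_sub_one hm hq) fun s hs => ?_
  exact mul_lt_mul_of_pos_right (strictMonoOn_div_sqrt_sq_mul_sq_add_one s hp hq hpq)
    (inv_pos.2 (sqrt_pos.2 (sub_pos.2 (one_lt_pow₀ hs hm))))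

/-- R is strictly increasing on (0, ∞). -/
theorem catenoid_height_strictMonoOn (n : ℕ) (hn : 2 ≤ n) :
    StrictMonoOn (fun a : ℝ => Real.sinh a * (∫ s in Set.Ioi (1:ℝ),
        1 / (Real.sqrt (Real.sinh a ^ 2 * s ^ 2 + 1) * Real.sqrt (s ^ (2 * n - 2) - 1))))
      (Set.Ioi 0) :=
  (strictMonoOn_mul_integral_one_div_sqrt_mul_sqrt (by omega)).comp
    (sinh_strictMono.strictMonoOn _) fun _ ha => (sinh_pos_iff.2 ha).le
end

section
/- R(a) → π/(2n−2) as a → +∞, where R(a) = sinh(a) · ∫₁^∞ (sinh²(a)·s² + 1)^(−1/2) · (s^(2n−2) − 1)^(−1/2) ds. -/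
open Real MeasureTheory Filter Set Topology

/-!
With `t = sinh a`, `R(a) = ∫₁^∞ t / √(t² s² + 1) · (s^(2n-2) - 1)^(-1/2) ds`. As `t → ∞` the factor `t / √(t² s² + 1)` increases to `1 / s`, so by dominated
convergence `R(a)` tends to `∫₁^∞ ds / (s √(s^(2m) - 1))` with `m = n - 1`, and this integral
equals `π / (2m)` because `arccos (s⁻ᵐ) / m` is an antiderivative of its integrand.
-/

lemma Real.tendsto_sinh_atTop : Tendsto sinh atTop atTop :=
  tendsto_atTop_mono' atTop ((eventually_ge_atTop 0).mono fun _ hx => self_le_sinh_iff.2 hx)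
    tendsto_id

lemma hasDerivAt_arccos_inv_pow_div {m : ℕ} (hm : m ≠ 0) {s : ℝ} (hs : 1 < s) :
    HasDerivAt (fun x : ℝ => arccos (x ^ m)⁻¹ / m) (1 / (s * √(s ^ (2 * m) - 1))) s := by
  have hsm : 1 < s ^ m := one_lt_pow₀ hs hm
  have hs2m : 0 < s ^ (2 * m) - 1 := sub_pos.2 (one_lt_pow₀ hs (by omega))
  have hpow : s ^ (2 * m) = (s ^ m) ^ 2 := by rw [mul_comm, pow_mul]
  have hsqrt : √(1 - ((s ^ m)⁻¹) ^ 2) = √(s ^ (2 * m) - 1) / s ^ m := by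
    rw [show 1 - ((s ^ m)⁻¹) ^ 2 = (s ^ (2 * m) - 1) / (s ^ m) ^ 2 by rw [hpow]; field_simp,
      sqrt_div hs2m.le, sqrt_sq (by positivity)]
  have hinv : HasDerivAt (fun x : ℝ => (x ^ m)⁻¹) (-(m * s ^ (m - 1)) / (s ^ m) ^ 2) s :=
    (hasDerivAt_pow m s).inv (by positivity)
  have harccos := hasDerivAt_arccos (x := (s ^ m)⁻¹)
    (by linarith [inv_pos.2 (by positivity : 0 < s ^ m)]) (inv_lt_one_of_one_lt₀ hsm).ne
  refine ((harccos.comp s hinv).div_const (m : ℝ)).congr_deriv ?_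
  have hm0 : (m : ℝ) ≠ 0 := Nat.cast_ne_zero.2 hm
  rw [hsqrt]
  field_simp
  rw [← pow_succ, Nat.sub_add_cancel (Nat.one_le_iff_ne_zero.2 hm)]

lemma tendsto_arccos_inv_pow_div_atTop {m : ℕ} (hm : m ≠ 0) :
    Tendsto (fun x : ℝ => arccos (x ^ m)⁻¹ / m) atTop (𝓝 (π / (2 * m))) := by
  have h := ((continuous_arccos.tendsto 0).comp (tendsto_pow_atTop hm).inv_tendsto_atTop).div_const
    (m : ℝ)
  rwa [arccos_zero, div_div] at h

lemma continuousWithinAt_arccos_inv_pow_div (m : ℕ) :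
    ContinuousWithinAt (fun x : ℝ => arccos (x ^ m)⁻¹ / m) (Ici 1) 1 :=
  ((continuous_arccos.continuousAt.comp
    ((continuous_pow m).continuousAt.inv₀ (by simp))).div_const _).continuousWithinAt

lemma one_div_mul_sqrt_pow_sub_one_nonneg (m : ℕ) {s : ℝ} (hs : s ∈ Ioi 1) :
    0 ≤ 1 / (s * √(s ^ (2 * m) - 1)) := by
  have : 0 < s := lt_trans one_pos hs
  positivity

lemma integrableOn_one_div_mul_sqrt_pow_sub_one {m : ℕ} (hm : m ≠ 0) :
    IntegrableOn (fun s : ℝ => 1 / (s * √(s ^ (2 * m) - 1))) (Ioi 1) :=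
  integrableOn_Ioi_deriv_of_nonneg (continuousWithinAt_arccos_inv_pow_div m)
    (fun _ hs => hasDerivAt_arccos_inv_pow_div hm hs)
    (fun _ hs => one_div_mul_sqrt_pow_sub_one_nonneg m hs) (tendsto_arccos_inv_pow_div_atTop hm)

lemma integral_Ioi_one_div_mul_sqrt_pow_sub_one {m : ℕ} (hm : m ≠ 0) :
    ∫ s in Ioi (1 : ℝ), 1 / (s * √(s ^ (2 * m) - 1)) = π / (2 * m) := by
  rw [integral_Ioi_of_hasDerivAt_of_nonneg (continuousWithinAt_arccos_inv_pow_div m)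
    (fun _ hs => hasDerivAt_arccos_inv_pow_div hm hs)
    (fun _ hs => one_div_mul_sqrt_pow_sub_one_nonneg m hs) (tendsto_arccos_inv_pow_div_atTop hm)]
  simp

lemma div_sqrt_sq_mul_sq_add_one_le (t : ℝ) {s : ℝ} (hs : 0 < s) :
    t / √(t ^ 2 * s ^ 2 + 1) ≤ s⁻¹ := by
  rw [div_le_iff₀ (by positivity), ← div_eq_inv_mul, le_div_iff₀ hs]
  exact le_sqrt_of_sq_le (by nlinarith)

lemma tendsto_div_sqrt_sq_mul_sq_add_one {s : ℝ} (hs : 0 < s) :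
    Tendsto (fun t : ℝ => t / √(t ^ 2 * s ^ 2 + 1)) atTop (𝓝 s⁻¹) := by
  have hcont : ContinuousAt (fun e : ℝ => (√(s ^ 2 + e))⁻¹) 0 :=
    ((continuous_sqrt.comp (continuous_const.add continuous_id)).continuousAt).inv₀
      (by simp [sqrt_sq hs.le, hs.ne'])
  have h := hcont.tendsto.comp ((tendsto_pow_atTop two_ne_zero).inv_tendsto_atTop)
  simp only [add_zero, sqrt_sq hs.le] at h
  refine h.congr' ((eventually_gt_atTop 0).mono fun t ht => ?_)
  simp only [Function.comp_apply, Pi.inv_apply]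
  rw [show t ^ 2 * s ^ 2 + 1 = t ^ 2 * (s ^ 2 + (t ^ 2)⁻¹) by field_simp,
    sqrt_mul (by positivity), sqrt_sq ht.le]
  have : 0 < √(s ^ 2 + (t ^ 2)⁻¹) := sqrt_pos.2 (by positivity)
  field_simp

lemma tendsto_mul_integral_catenoid {m : ℕ} (hm : m ≠ 0) :
    Tendsto (fun t : ℝ => t * ∫ s in Ioi (1 : ℝ), 1 / (√(t ^ 2 * s ^ 2 + 1) * √(s ^ (2 * m) - 1)))
      atTop (𝓝 (π / (2 * m))) := by
  rw [← integral_Ioi_one_div_mul_sqrt_pow_sub_one hm]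
  simp_rw [← integral_const_mul]
  have hintegrand : ∀ t s : ℝ, t * (1 / (√(t ^ 2 * s ^ 2 + 1) * √(s ^ (2 * m) - 1)))
      = t / √(t ^ 2 * s ^ 2 + 1) * (√(s ^ (2 * m) - 1))⁻¹ := fun _ _ => by ring
  have hdominant : ∀ s : ℝ, 1 / (s * √(s ^ (2 * m) - 1)) = s⁻¹ * (√(s ^ (2 * m) - 1))⁻¹ :=
    fun _ => by ring
  refine tendsto_integral_filter_of_dominated_convergence _ ?_ ?_
    (integrableOn_one_div_mul_sqrt_pow_sub_one hm) ?_
  · exact .of_forall fun t => (by fun_prop : Measurable _).aestronglyMeasurable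
  · filter_upwards [eventually_ge_atTop 0] with t ht
    filter_upwards [ae_restrict_mem measurableSet_Ioi] with s (hs : 1 < s)
    rw [hintegrand, hdominant, norm_of_nonneg (by positivity)]
    gcongr
    exact div_sqrt_sq_mul_sq_add_one_le t (by linarith)
  · filter_upwards [ae_restrict_mem measurableSet_Ioi] with s (hs : 1 < s)
    simp_rw [hintegrand, hdominant]
    exact (tendsto_div_sqrt_sq_mul_sq_add_one (by linarith)).mul_const _

/-- R(a) → π/(2n−2) as a → +∞. -/
theorem catenoid_height_tendsto_pi (n : ℕ) (hn : 2 ≤ n) :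
    Tendsto (fun a : ℝ => Real.sinh a * (∫ s in Set.Ioi (1:ℝ),
        1 / (Real.sqrt (Real.sinh a ^ 2 * s ^ 2 + 1) * Real.sqrt (s ^ (2 * n - 2) - 1))))
      atTop (nhds (Real.pi / (2 * (n : ℝ) - 2))) := by
  have h := (tendsto_mul_integral_catenoid (m := n - 1) (by omega)).comp tendsto_sinh_atTop
  rw [Nat.cast_sub (by omega), Nat.cast_one, mul_sub_one] at h
  rwa [show 2 * (n - 1) = 2 * n - 2 by omega] at h
end
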